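/- arXiv:1705.06892 — 7 statements merged into one kernel-verified Lean document; each statement's English description precedes it below -/
import Mathlib

section
/- Every generalized polyhedral convex set has only finitely many faces. -/
/-!
A nonempty face `F` of `D = {x ∈ L | fᵢ x ≤ αᵢ}` is determined by the set `I` of constraints
that are tight on all of `F`: it equals `{y ∈ D | fᵢ y = αᵢ for i ∈ I}`. Convexity of `F` yields a
point `x ∈ F` that is strict in every constraint outside `I`. For `y` in the right-hand side the
point `x + t • (x - y)` stays in `D` for small `t > 0`, so `x` lies in the open segment between it
and `y`, and the face property puts `y` in `F`. Hence there are at most `2 ^ p + 1` faces.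
-/

open Pointwise

/-- A generalized polyhedral convex set: the intersection of a closed affine
subspace with finitely many closed half-spaces given by continuous linear
functionals. -/
def IsGPCS {X : Type*} [AddCommGroup X] [Module ℝ X] [TopologicalSpace X]
    (D : Set X) : Prop :=
  ∃ (p : ℕ) (f : Fin p → (X →L[ℝ] ℝ)) (α : Fin p → ℝ)
    (x₀ : X) (W : Submodule ℝ X),
    IsClosed (x₀ +ᵥ (W : Set X)) ∧
    D = {x ∈ x₀ +ᵥ (W : Set X) | ∀ i, f i x ≤ α i}

/-- A polyhedral convex set: a finite intersection of closed half-spaces. -/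
def IsPCS {X : Type*} [AddCommGroup X] [Module ℝ X] [TopologicalSpace X]
    (D : Set X) : Prop :=
  ∃ (p : ℕ) (f : Fin p → (X →L[ℝ] ℝ)) (α : Fin p → ℝ),
    D = {x | ∀ i, f i x ≤ α i}

/-- `F` is a face of the convex set `C`. -/
def IsFaceOf {X : Type*} [AddCommGroup X] [Module ℝ X] (F C : Set X) : Prop :=
  Convex ℝ F ∧ F ⊆ C ∧
    ∀ ⦃x y : X⦄, x ∈ C → y ∈ C → ∀ t : ℝ, 0 < t → t < 1 →
      (1 - t) • x + t • y ∈ F → x ∈ F ∧ y ∈ F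

open Filter Topology

section

variable {X ι : Type*} [AddCommGroup X] [Module ℝ X]

theorem IsFaceOf.mem_of_add_smul_sub_mem {F C : Set X} (hF : IsFaceOf F C) {x y : X}
    (hx : x ∈ F) (hy : y ∈ C) {t : ℝ} (ht : 0 < t) (hz : x + t • (x - y) ∈ C) : y ∈ F := by
  have ht₁ : 0 < 1 + t := by linarith
  -- `x` divides the segment from `x + t • (x - y)` to `y` in the ratio `1 : t`.
  have hcomb : (1 - t / (1 + t)) • (x + t • (x - y)) + (t / (1 + t)) • y = x := by
    match_scalars <;> field_simp <;> ring
  refine (hF.2.2 hz hy (t / (1 + t)) (by positivity) ?_ (by rw [hcomb]; exact hx)).2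
  rw [div_lt_one ht₁]
  linarith

variable {L : AffineSubspace ℝ X} {f : ι → X →ₗ[ℝ] ℝ} {α : ι → ℝ}

variable (L f α) in
def polyhedralSet : Set X := {x ∈ L | ∀ i, f i x ≤ α i}

theorem Convex.exists_mem_forall_lt_of_exists_lt [Finite ι] {F : Set X} (hF : Convex ℝ F)
    (hne : F.Nonempty) (hle : ∀ x ∈ F, ∀ i, f i x ≤ α i) :
    ∃ x ∈ F, ∀ i, (∃ y ∈ F, f i y < α i) → f i x < α i := by
  classical
  have := Fintype.ofFinite ι
  suffices ∀ s : Finset ι, ∃ x ∈ F, ∀ i ∈ s, (∃ y ∈ F, f i y < α i) → f i x < α i by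
    simpa using this Finset.univ
  intro s
  induction s using Finset.induction_on with
  | empty =>
    obtain ⟨x, hx⟩ := hne
    exact ⟨x, hx, by simp⟩
  | insert j s _ ih =>
    obtain ⟨x, hxF, hx⟩ := ih
    by_cases hj : ∃ y ∈ F, f j y < α j
    · obtain ⟨y, hyF, hy⟩ := hj
      -- the midpoint is strict wherever `x` or `y` is
      refine ⟨(1 / 2 : ℝ) • x + (1 / 2 : ℝ) • y,
        hF hxF hyF (by norm_num) (by norm_num) (by norm_num), ?_⟩
      rintro i hi ⟨z, hzF, hz⟩
      have hxi := hle x hxF i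
      have hyi := hle y hyF i
      simp only [map_add, map_smul, smul_eq_mul]
      rcases Finset.mem_insert.1 hi with rfl | hi
      · linarith
      · linarith [hx i hi ⟨z, hzF, hz⟩]
    · refine ⟨x, hxF, fun i hi hiF ↦ ?_⟩
      rcases Finset.mem_insert.1 hi with rfl | hi
      · exact absurd hiF hj
      · exact hx i hi hiF

theorem exists_pos_add_smul_sub_mem_polyhedralSet [Finite ι] {x y : X}
    (hx : x ∈ polyhedralSet L f α) (hy : y ∈ polyhedralSet L f α)
    (hact : ∀ i, f i x = α i → f i y = α i) :
    ∃ t : ℝ, 0 < t ∧ x + t • (x - y) ∈ polyhedralSet L f α := by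
  have hline : ∀ t : ℝ, x + t • (x - y) ∈ L := fun t ↦ by
    simpa [vsub_eq_sub, vadd_eq_add, add_comm] using L.smul_vsub_vadd_mem t hx.1 hy.1 hx.1
  have hval : ∀ i (t : ℝ), f i (x + t • (x - y)) = f i x + t * (f i x - f i y) := by
    intro i t
    simp only [map_add, map_smul, map_sub, smul_eq_mul]
  have hev : ∀ i, ∀ᶠ t in 𝓝[>] (0 : ℝ), f i x + t * (f i x - f i y) ≤ α i := by
    intro i
    rcases (hx.2 i).lt_or_eq with hlt | heq
    · have hcont : Continuous fun t : ℝ ↦ f i x + t * (f i x - f i y) := by fun_prop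
      have hlt' : f i x + 0 * (f i x - f i y) < α i := by simpa using hlt
      exact ((hcont.tendsto 0).eventually (gt_mem_nhds hlt')).filter_mono nhdsWithin_le_nhds
        |>.mono fun _ ↦ le_of_lt
    · exact .of_forall fun t ↦ by simp [heq, hact i heq]
  obtain ⟨t, hti, ht⟩ := ((eventually_all.2 hev).and self_mem_nhdsWithin).exists
  exact ⟨t, ht, hline t, fun i ↦ (hval i t).symm ▸ hti i⟩

theorem IsFaceOf.eq_setOf_active [Finite ι] {F : Set X}
    (hF : IsFaceOf F (polyhedralSet L f α)) (hne : F.Nonempty) :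
    F = {y ∈ polyhedralSet L f α | ∀ i ∈ {i | ∀ x ∈ F, f i x = α i}, f i y = α i} := by
  have hle : ∀ x ∈ F, ∀ i, f i x ≤ α i := fun x hx ↦ (hF.2.1 hx).2
  obtain ⟨x, hxF, hx⟩ := hF.1.exists_mem_forall_lt_of_exists_lt hne hle
  refine Set.Subset.antisymm (fun y hy ↦ ⟨hF.2.1 hy, fun i hi ↦ hi y hy⟩) ?_
  rintro y ⟨hyD, hy⟩
  have hact : ∀ i, f i x = α i → f i y = α i := by
    intro i hxi
    refine hy i fun z hz ↦ (hle z hz i).eq_of_not_lt fun hzi ↦ ?_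
    exact (hx i ⟨z, hz, hzi⟩).ne hxi
  obtain ⟨t, ht, hz⟩ := exists_pos_add_smul_sub_mem_polyhedralSet (hF.2.1 hxF) hyD hact
  exact hF.mem_of_add_smul_sub_mem hxF hyD ht hz

theorem finite_setOf_isFaceOf_polyhedralSet [Finite ι] :
    {F | IsFaceOf F (polyhedralSet L f α)}.Finite := by
  refine ((Set.finite_range fun I : Set ι ↦
    {y ∈ polyhedralSet L f α | ∀ i ∈ I, f i y = α i}).insert ∅).subset ?_
  intro F hF
  rcases F.eq_empty_or_nonempty with rfl | hne
  · exact Set.mem_insert _ _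
  · exact Set.mem_insert_of_mem _ ⟨_, (hF.eq_setOf_active hne).symm⟩

end

theorem gpcs_finitely_many_faces_general {X : Type*} [AddCommGroup X] [Module ℝ X] [TopologicalSpace X]
    (D : Set X) (hD : IsGPCS D) :
    {F : Set X | IsFaceOf F D}.Finite := by
  obtain ⟨p, f, α, x₀, W, -, rfl⟩ := hD
  have hD : {x ∈ x₀ +ᵥ (W : Set X) | ∀ i, f i x ≤ α i} =
      polyhedralSet (AffineSubspace.mk' x₀ W) (fun i ↦ (f i : X →ₗ[ℝ] ℝ)) α := by
    ext x
    simp [polyhedralSet, Set.mem_vadd_set_iff_neg_vadd_mem, neg_add_eq_sub]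
  rw [hD]
  exact finite_setOf_isFaceOf_polyhedralSet

/-- Every generalized polyhedral convex set has only finitely many faces. -/
theorem gpcs_finitely_many_faces {X : Type*} [AddCommGroup X] [Module ℝ X] [TopologicalSpace X]
    [IsTopologicalAddGroup X] [ContinuousSMul ℝ X] [LocallyConvexSpace ℝ X] [T2Space X]
    (D : Set X) (hD : IsGPCS D) :
    {F : Set X | IsFaceOf F D}.Finite :=
  gpcs_finitely_many_faces_general D hD
end

section
/- Every nonempty face of a generalized polyhedral convex set D is an exposed face, i.e., of the form argmin{⟨x*, x⟩ | x ∈ D} for some continuous linear functional x*. -/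
open Pointwise

open AffineMap Filter Topology

section
variable {E ι 𝓕 : Type*} [AddCommGroup E] [Module ℝ E] [FunLike 𝓕 E ℝ] [LinearMapClass 𝓕 ℝ E ℝ]

theorem IsFaceOf.mem_of_lineMap_mem {F C : Set E} (hF : IsFaceOf F C) {x y : E} {c : ℝ}
    (hx : x ∈ C) (hy : y ∈ F) (hc : 1 < c) (hxy : lineMap x y c ∈ C) : x ∈ F := by
  have hc₀ : 0 < c := zero_lt_one.trans hc
  refine (hF.2.2 hx hxy c⁻¹ (inv_pos.2 hc₀) (inv_lt_one_of_one_lt₀ hc) ?_).1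
  convert hy using 1
  rw [lineMap_apply_module', smul_add, smul_smul, inv_mul_cancel₀ hc₀.ne']
  module

theorem Convex.exists_mem_forall_eq_or_lt [Finite ι] {F : Set E} (hF : Convex ℝ F)
    (hne : F.Nonempty) (f : ι → 𝓕) (α : ι → ℝ) (hle : ∀ i, ∀ y ∈ F, f i y ≤ α i) :
    ∃ x ∈ F, ∀ i, (∀ y ∈ F, f i y = α i) ∨ f i x < α i := by
  classical
  have := Fintype.ofFinite ι
  suffices ∀ s : Finset ι, ∃ x ∈ F, ∀ i ∈ s, (∀ y ∈ F, f i y = α i) ∨ f i x < α i by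
    simpa using this Finset.univ
  intro s
  induction s using Finset.induction with
  | empty =>
    obtain ⟨x, hx⟩ := hne
    exact ⟨x, hx, by simp⟩
  | insert a s _ ih =>
    obtain ⟨x, hxF, hx⟩ := ih
    by_cases ha : ∀ y ∈ F, f a y = α a
    · exact ⟨x, hxF, Finset.forall_mem_insert _ _ _ |>.2 ⟨.inl ha, hx⟩⟩
    push Not at ha
    obtain ⟨z, hzF, hz⟩ := ha
    have hza : f a z < α a := (hle a z hzF).lt_of_ne hz
    -- the midpoint keeps every strict inequality of `x` and gains the one of `z`
    refine ⟨(1 / 2 : ℝ) • x + (1 / 2 : ℝ) • z, hF hxF hzF (by norm_num) (by norm_num) (by norm_num),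
      Finset.forall_mem_insert _ _ _ |>.2 ⟨.inr ?_, fun i hi => (hx i hi).imp_right fun hxi => ?_⟩⟩
    · simp only [map_add, map_smul, smul_eq_mul]
      linarith [hle a x hxF]
    · simp only [map_add, map_smul, smul_eq_mul]
      linarith [hle i z hzF]

theorem exists_one_lt_forall_lineMap_le [Finite ι] (f : ι → 𝓕) (α : ι → ℝ) {x y : E}
    (h : ∀ i, f i x = α i ∧ f i y = α i ∨ f i y < α i) :
    ∃ c : ℝ, 1 < c ∧ ∀ i, f i (lineMap x y c) ≤ α i := by
  have hf : ∀ i c, f i (lineMap x y c) = lineMap (f i x) (f i y) c := fun i (c : ℝ) => by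
    simp only [lineMap_apply_module, map_add, map_smul]
  have hnear : ∀ᶠ c in 𝓝 (1 : ℝ), ∀ i, f i (lineMap x y c) ≤ α i := by
    refine eventually_all.2 fun i => ?_
    rcases h i with ⟨hx, hy⟩ | hy
    · exact .of_forall fun c => by rw [hf, hx, hy, lineMap_same_apply]
    · have hcont : Continuous fun c : ℝ => f i (lineMap x y c) := by
        simp only [hf, lineMap_apply_ring]; fun_prop
      have : f i (lineMap x y (1 : ℝ)) < α i := by rwa [lineMap_apply_one]
      exact (hcont.continuousAt.eventually_lt continuousAt_const this).mono fun _ => le_of_lt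
  obtain ⟨c, hc, hc₁⟩ :=
    ((hnear.filter_mono nhdsWithin_le_nhds).and (self_mem_nhdsWithin (s := Set.Ioi 1))).exists
  exact ⟨c, hc₁, hc⟩

end

theorem setOf_forall_sum_le_eq {E ι : Type*} {D : Set E} (f : ι → E → ℝ) (α : ι → ℝ)
    (hD : ∀ x ∈ D, ∀ i, f i x ≤ α i) (s : Finset ι) {x : E} (hx : x ∈ D)
    (hxs : ∀ i ∈ s, f i x = α i) :
    {u ∈ D | ∀ v ∈ D, ∑ i ∈ s, f i v ≤ ∑ i ∈ s, f i u} = {u ∈ D | ∀ i ∈ s, f i u = α i} := by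
  refine Set.ext fun u => and_congr_right fun hu => ?_
  have hmax : ∀ v ∈ D, ∑ i ∈ s, f i v ≤ ∑ i ∈ s, α i := fun v hv =>
    Finset.sum_le_sum fun i _ => hD v hv i
  rw [← Finset.sum_eq_sum_iff_of_le fun i _ => hD u hu i]
  refine ⟨fun h => (hmax u hu).antisymm ?_, fun h v hv => h ▸ hmax v hv⟩
  calc ∑ i ∈ s, α i = ∑ i ∈ s, f i x := (Finset.sum_congr rfl hxs).symm
    _ ≤ _ := h x hx

theorem gpcs_face_isExposed_general {X : Type*} [AddCommGroup X] [Module ℝ X] [TopologicalSpace X]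
    (D : Set X) (hD : IsGPCS D) (F : Set X) (hF : IsFaceOf F D) (hne : F.Nonempty) :
    ∃ g : X →L[ℝ] ℝ, F = {u ∈ D | ∀ v ∈ D, g u ≤ g v} := by
  classical
  obtain ⟨p, f, α, x₀, W, -, hD⟩ := hD
  have hDle : ∀ x ∈ D, ∀ i, f i x ≤ α i := fun x hx => (hD ▸ hx).2
  obtain ⟨hFconv, hFD, -⟩ := id hF
  obtain ⟨xb, hxbF, hxb⟩ :=
    hFconv.exists_mem_forall_eq_or_lt hne f α fun i _ hy => hDle _ (hFD hy) i
  set I := Finset.univ.filter fun i => ∀ y ∈ F, f i y = α i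
  have hxbI : ∀ i ∈ I, f i xb = α i := fun i hi => (Finset.mem_filter.1 hi).2 xb hxbF
  have hFI : F = {u ∈ D | ∀ i ∈ I, f i u = α i} := by
    refine Set.Subset.antisymm (fun u hu => ⟨hFD hu, fun i hi => (Finset.mem_filter.1 hi).2 u hu⟩) ?_
    rintro u ⟨hu, huI⟩
    obtain ⟨c, hc, hcle⟩ := exists_one_lt_forall_lineMap_le f α fun i =>
      (hxb i).imp_left fun hi => ⟨huI i (Finset.mem_filter.2 ⟨Finset.mem_univ i, hi⟩), hi xb hxbF⟩
    refine hF.mem_of_lineMap_mem hu hxbF hc ?_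
    have hxbD := hFD hxbF
    rw [hD] at hu hxbD ⊢
    exact ⟨lineMap_mem (Q := x₀ +ᵥ W.toAffineSubspace) c hu.1 hxbD.1, hcle⟩
  refine ⟨-∑ i ∈ I, f i, hFI.trans ?_⟩
  rw [← setOf_forall_sum_le_eq (fun i => f i) α hDle I (hFD hxbF) hxbI]
  simp

/-- Every nonempty face of a generalized polyhedral convex set is an exposed face. -/
theorem gpcs_face_isExposed {X : Type*} [AddCommGroup X] [Module ℝ X] [TopologicalSpace X]
    [IsTopologicalAddGroup X] [ContinuousSMul ℝ X] [LocallyConvexSpace ℝ X] [T2Space X]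
    (D : Set X) (hD : IsGPCS D) (F : Set X) (hF : IsFaceOf F D) (hne : F.Nonempty) :
    ∃ g : X →L[ℝ] ℝ, F = {u ∈ D | ∀ v ∈ D, g u ≤ g v} :=
  gpcs_face_isExposed_general D hD F hF hne
end

section
/- Let D ⊆ X be a closed convex set with nonempty relative interior. If D has only finitely many faces, then D is a generalized polyhedral convex set. -/
open Pointwise

/-!
Translating by a relative interior point `x₀` carries `D` into the closure `W` of the direction of
its affine span, where it has nonempty interior; faces and polyhedrality transfer along this
injective affine map, functionals on `W` extending to `X` by Hahn–Banach.

So let `x₀ ∈ interior D`. Each face exposed by a supporting half-space `φ ≤ c` with `φ x₀ < c`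
contributes one such half-space, and there are finitely many. If `y ∉ D` lay in all of them, the
segment `[x₀, y]` would leave `D` at a non-interior point `z`; a functional supporting `D` at `z`
exposes a face through `z`, whose chosen half-space then has `φ z = c`, impossible since
`φ x₀ < c`, `φ y ≤ c` and `z ≠ y`.
-/

open Set Function

theorem AffineSubspace.coe_eq_vadd_direction {k V : Type*} [Ring k] [AddCommGroup V] [Module k V]
    {s : AffineSubspace k V} {p : V} (hp : p ∈ s) : (s : Set V) = p +ᵥ (s.direction : Set V) := by
  ext y
  refine ⟨fun hy => ⟨y - p, vsub_mem_direction hy hp, by simp⟩, ?_⟩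
  rintro ⟨v, hv, rfl⟩
  simpa [add_comm] using vadd_mem_of_mem_direction hv hp

section Faces

variable {E X : Type*} [AddCommGroup E] [Module ℝ E] [AddCommGroup X] [Module ℝ X]

theorem isFaceOf_setOf_eq_of_forall_le {D : Set X} (hD : Convex ℝ D) (φ : X →ₗ[ℝ] ℝ) {c : ℝ}
    (hφ : ∀ x ∈ D, φ x ≤ c) : IsFaceOf {x ∈ D | φ x = c} D := by
  refine ⟨hD.inter (convex_hyperplane φ.isLinear c), fun x hx => hx.1, ?_⟩
  rintro u v hu hv t ht₀ ht₁ ⟨-, hc⟩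
  simp only [map_add, map_smul, smul_eq_mul] at hc
  have hu' := hφ u hu
  have hv' := hφ v hv
  exact ⟨⟨hu, by nlinarith⟩, ⟨hv, by nlinarith⟩⟩

theorem IsFaceOf.image {F C : Set E} (h : IsFaceOf F C) (f : E →ᵃ[ℝ] X) (hf : Injective f) :
    IsFaceOf (f '' F) (f '' C) := by
  obtain ⟨hFconv, hFC, hext⟩ := h
  refine ⟨hFconv.affine_image f, image_mono hFC, ?_⟩
  rintro _ _ ⟨u, hu, rfl⟩ ⟨v, hv, rfl⟩ t ht₀ ht₁ ⟨w, hw, hwe⟩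
  rw [← Convex.combo_affine_apply (sub_add_cancel 1 t)] at hwe
  obtain rfl := hf hwe
  exact (hext hu hv t ht₀ ht₁ hw).imp (mem_image_of_mem f) (mem_image_of_mem f)

theorem Set.Finite.setOf_isFaceOf_preimage {D : Set X} (hfin : {F | IsFaceOf F D}.Finite)
    (f : E →ᵃ[ℝ] X) (hf : Injective f) (hD : D ⊆ range f) :
    {F | IsFaceOf F (f ⁻¹' D)}.Finite :=
  (hfin.preimage (image_injective.2 hf).injOn).subset fun F hF => by
    simpa [image_preimage_eq_of_subset hD] using hF.image f hf

theorem LinearMap.lt_of_mem_segment (φ : X →ₗ[ℝ] ℝ) {x y z : X} {c : ℝ} (hx : φ x < c)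
    (hy : φ y ≤ c) (hz : z ∈ segment ℝ x y) (hzy : z ≠ y) : φ z < c := by
  obtain ⟨a, b, ha, hb, hab, rfl⟩ := hz
  obtain rfl | ha := ha.eq_or_lt
  · obtain rfl : b = 1 := by simpa using hab
    simp at hzy
  calc φ (a • x + b • y) = a * φ x + b * φ y := by simp
    _ < a * c + b * c :=
      add_lt_add_of_lt_of_le (mul_lt_mul_of_pos_left hx ha) (mul_le_mul_of_nonneg_left hy hb)
    _ = c := by rw [← add_mul, hab, one_mul]

end Faces

section Polyhedral

variable {X : Type*} [AddCommGroup X] [Module ℝ X] [TopologicalSpace X]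

theorem isPCS_setOf_forall_le {ι : Type*} [Finite ι] (f : ι → X →L[ℝ] ℝ) (α : ι → ℝ) :
    IsPCS {x | ∀ i, f i x ≤ α i} := by
  obtain ⟨n, ⟨e⟩⟩ := Finite.exists_equiv_fin ι
  exact ⟨n, f ∘ e.symm, α ∘ e.symm, by ext x; simp [e.symm.forall_congr_left]⟩

theorem exists_mem_segment_mem_notMem_interior [ContinuousAdd X] [ContinuousSMul ℝ X] {D : Set X}
    (hD : IsClosed D) {x y : X} (hx : x ∈ interior D) (hy : y ∉ D) :
    ∃ z ∈ segment ℝ x y, z ∈ D ∧ z ∉ interior D := by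
  by_contra! h
  obtain ⟨z, -, hz, hzD⟩ := (convex_segment x y).isPreconnected _ _ isOpen_interior
    hD.isOpen_compl (fun z hz => (em (z ∈ D)).imp (h z hz) id)
    ⟨x, left_mem_segment ℝ x y, hx⟩ ⟨y, right_mem_segment ℝ x y, hy⟩
  exact hzD (interior_subset hz)

variable [IsTopologicalAddGroup X] [ContinuousSMul ℝ X]

theorem Convex.exists_forall_le_of_notMem_interior {D : Set X} (hD : Convex ℝ D) {x z : X}
    (hx : x ∈ interior D) (hz : z ∉ interior D) :
    ∃ g : X →L[ℝ] ℝ, g x < g z ∧ ∀ y ∈ D, g y ≤ g z := by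
  obtain ⟨g, hg⟩ := geometric_hahn_banach_open_point hD.interior isOpen_interior hz
  refine ⟨g, hg x hx, fun y hy => ?_⟩
  refine closure_minimal (fun w hw => (hg w hw).le) (isClosed_Iic.preimage g.continuous) ?_
  rw [hD.closure_interior_eq_closure_of_nonempty_interior ⟨x, hx⟩]
  exact subset_closure hy

theorem Convex.isPCS_of_finite_faces {D : Set X} (hconv : Convex ℝ D) (hclosed : IsClosed D)
    (hint : (interior D).Nonempty) (hfin : {F : Set X | IsFaceOf F D}.Finite) : IsPCS D := by
  obtain ⟨x₀, hx₀⟩ := hint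
  let 𝓔 : Set (Set X) := {F | ∃ (φ : X →L[ℝ] ℝ) (c : ℝ),
    (∀ x ∈ D, φ x ≤ c) ∧ φ x₀ < c ∧ F = {x ∈ D | φ x = c}}
  have : Finite 𝓔 := Finite.to_subtype <| hfin.subset <| by
    rintro _ ⟨φ, c, hφ, -, rfl⟩
    exact isFaceOf_setOf_eq_of_forall_le hconv φ hφ
  choose φ c hφD hφx₀ hφF using fun F : 𝓔 => F.2
  convert isPCS_setOf_forall_le φ c
  refine Subset.antisymm (fun y hy F => hφD F y hy) fun y hy => by_contra fun hyD => ?_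
  obtain ⟨z, hzseg, hzD, hzint⟩ := exists_mem_segment_mem_notMem_interior hclosed hx₀ hyD
  obtain ⟨g, hgx₀, hgD⟩ := hconv.exists_forall_le_of_notMem_interior hx₀ hzint
  let F : 𝓔 := ⟨{x ∈ D | g x = g z}, g, g z, hgD, hgx₀, rfl⟩
  have hzF : z ∈ (F : Set X) := ⟨hzD, rfl⟩
  rw [hφF F] at hzF
  exact ((φ F : X →ₗ[ℝ] ℝ).lt_of_mem_segment (hφx₀ F) (hy F) hzseg
    (ne_of_mem_of_not_mem hzD hyD)).ne hzF.2

theorem isGPCS_of_isPCS_preimage [LocallyConvexSpace ℝ X] {D : Set X} (x₀ : X)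
    {W : Submodule ℝ X} (hW : IsClosed (W : Set X)) (hD : D ⊆ x₀ +ᵥ (W : Set X))
    (h : IsPCS ((fun w : W => x₀ + (w : X)) ⁻¹' D)) : IsGPCS D := by
  obtain ⟨p, g, β, hg⟩ := h
  choose f hf using fun i => StrongDual.exists_extension W (g i)
  have key : ∀ w : W, x₀ + (w : X) ∈ D ↔ ∀ i, f i (x₀ + w) ≤ β i + f i x₀ := by
    intro w
    rw [← mem_preimage (f := fun w : W => x₀ + (w : X)), hg]
    simp [hf, add_comm (f _ x₀)]
  refine ⟨p, f, fun i => β i + f i x₀, x₀, W, hW.vadd x₀, Subset.antisymm ?_ ?_⟩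
  · intro x hx
    obtain ⟨w, hw, rfl⟩ := hD hx
    exact ⟨⟨w, hw, rfl⟩, (key ⟨w, hw⟩).1 hx⟩
  · rintro _ ⟨⟨w, hw, rfl⟩, hx⟩
    exact (key ⟨w, hw⟩).2 hx

end Polyhedral

theorem closed_convex_finitely_many_faces_isGPCS_general {X : Type*} [AddCommGroup X] [Module ℝ X] [TopologicalSpace X]
    [IsTopologicalAddGroup X] [ContinuousSMul ℝ X] [LocallyConvexSpace ℝ X]
    (D : Set X) (hconv : Convex ℝ D) (hclosed : IsClosed D)
    (hri : ∃ x ∈ D, ∃ U : Set X, IsOpen U ∧ x ∈ U ∧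
      U ∩ closure ((affineSpan ℝ D : AffineSubspace ℝ X) : Set X) ⊆ D)
    (hfin : {F : Set X | IsFaceOf F D}.Finite) :
    IsGPCS D := by
  obtain ⟨x₀, hx₀D, U, hU, hx₀U, hUD⟩ := hri
  set W := (affineSpan ℝ D).direction.topologicalClosure
  have hcl : closure (affineSpan ℝ D : Set X) = x₀ +ᵥ (W : Set X) := by
    rw [AffineSubspace.coe_eq_vadd_direction (subset_affineSpan ℝ D hx₀D), closure_vadd,
      Submodule.topologicalClosure_coe]
  have hDW : D ⊆ x₀ +ᵥ (W : Set X) := hcl ▸ (subset_affineSpan ℝ D).trans subset_closure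
  let e : W →ᵃ[ℝ] X := ⟨fun w => x₀ + w, W.subtype, fun w v => by simp [add_left_comm]⟩
  have he : Continuous e := continuous_const.add continuous_subtype_val
  have hint : (0 : W) ∈ interior (e ⁻¹' D) := mem_interior.2
    ⟨e ⁻¹' U, fun w hw => hUD ⟨hw, hcl ▸ ⟨w, w.2, rfl⟩⟩, hU.preimage he, by simpa [e] using hx₀U⟩
  refine isGPCS_of_isPCS_preimage x₀
    (affineSpan ℝ D).direction.isClosed_topologicalClosure hDW ?_
  show IsPCS (e ⁻¹' D)
  refine (hconv.affine_preimage e).isPCS_of_finite_faces (hclosed.preimage he) ⟨0, hint⟩ ?_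
  refine hfin.setOf_isFaceOf_preimage e (fun v w h => Subtype.ext (add_left_cancel h)) ?_
  intro x hx
  obtain ⟨w, hw, rfl⟩ := hDW hx
  exact ⟨⟨w, hw⟩, rfl⟩

/-- A closed convex set with nonempty relative interior and only finitely many
faces is a generalized polyhedral convex set. -/
theorem closed_convex_finitely_many_faces_isGPCS {X : Type*} [AddCommGroup X] [Module ℝ X] [TopologicalSpace X]
    [IsTopologicalAddGroup X] [ContinuousSMul ℝ X] [LocallyConvexSpace ℝ X] [T2Space X]
    (D : Set X) (hconv : Convex ℝ D) (hclosed : IsClosed D)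
    (hri : ∃ x ∈ D, ∃ U : Set X, IsOpen U ∧ x ∈ U ∧
      U ∩ closure ((affineSpan ℝ D : AffineSubspace ℝ X) : Set X) ⊆ D)
    (hfin : {F : Set X | IsFaceOf F D}.Finite) :
    IsGPCS D :=
  closed_convex_finitely_many_faces_isGPCS_general D hconv hclosed hri hfin
end

section
/- If T : X → Y is a linear map between locally convex Hausdorff topological vector spaces and D ⊆ X is a nonempty generalized polyhedral convex set, then the closure of T(D) is a generalized polyhedral convex set in Y. -/
/-!
After translating, `D` is a polyhedron `P` in the subspace `W`, i.e. a set cut out by finitely many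
linear inequalities. Such a set is `K + Q` with `K` the common kernel of the functionals and `Q` a
polyhedron in a finite-dimensional complement of `K`. Let `M` be the closure of `T K` and
`ρ : Y → Y ⧸ M`. Then `M + T Q = ρ⁻¹ (ρ (T Q))`, and `ρ (T Q)` is the linear image of a polyhedron
between finite-dimensional spaces, hence a polyhedron by Fourier–Motzkin elimination. Since `Y ⧸ M`
has a separating dual (Hahn–Banach in `Y`), its defining inequalities extend to continuous
functionals on `Y ⧸ M`, so `M + T Q` is a closed generalized polyhedral convex set, and it is the
closure of `T P = T K + T Q`.
-/

open Pointwise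

theorem Finset.exists_forall_le_and_forall_ge {ι α : Type*} [LinearOrder α] [Nonempty α]
    (s t : Finset ι) (f g : ι → α) (h : ∀ i ∈ s, ∀ j ∈ t, f i ≤ g j) :
    ∃ x, (∀ i ∈ s, f i ≤ x) ∧ ∀ j ∈ t, x ≤ g j := by
  rcases s.eq_empty_or_nonempty with rfl | hs
  · obtain ⟨x, hx⟩ := (t.image g).bddBelow
    exact ⟨x, by simp, fun j hj => hx (Finset.mem_image_of_mem g hj)⟩
  · exact ⟨s.sup' hs f, fun i hi => s.le_sup' f hi,
      fun j hj => s.sup'_le hs f fun i hi => h i hi j hj⟩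

theorem exists_forall_mul_le_iff {ι : Type*} [Fintype ι] (a r : ι → ℝ) :
    (∃ t, ∀ i, a i * t ≤ r i) ↔
      (∀ i, a i = 0 → 0 ≤ r i) ∧ ∀ i j, 0 < a i → a j < 0 → r j / a j ≤ r i / a i := by
  constructor
  · rintro ⟨t, ht⟩
    refine ⟨fun i hi => by simpa [hi] using ht i, fun i j hi hj => ?_⟩
    calc r j / a j ≤ t := (div_le_iff_of_neg hj).2 (by linarith [ht j])
      _ ≤ r i / a i := (le_div_iff₀ hi).2 (by linarith [ht i])
  · rintro ⟨hzero, hpair⟩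
    obtain ⟨t, hneg, hpos⟩ := Finset.exists_forall_le_and_forall_ge ({j | a j < 0} : Finset ι)
      ({i | 0 < a i} : Finset ι) (fun j => r j / a j) (fun i => r i / a i)
      (fun j hj i hi => hpair i j (by simpa using hi) (by simpa using hj))
    refine ⟨t, fun i => ?_⟩
    rcases lt_trichotomy (a i) 0 with hi | hi | hi
    · have := (div_le_iff_of_neg hi).1 (hneg i (by simpa using hi))
      linarith
    · simpa [hi] using hzero i hi
    · have := (le_div_iff₀ hi).1 (hpos i (by simpa using hi))
      linarith

theorem Submodule.eq_add_image_subtype_preimage_of_codisjoint {R E : Type*} [Ring R]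
    [AddCommGroup E] [Module R E] {K F : Submodule R E} (hKF : Codisjoint K F) {P : Set E}
    (hP : ∀ x ∈ P, ∀ k ∈ K, x + k ∈ P) :
    P = (K : Set E) + F.subtype '' (F.subtype ⁻¹' P) := by
  ext x
  simp only [Set.mem_add, Set.mem_image, Set.mem_preimage, Submodule.subtype_apply]
  constructor
  · intro hx
    obtain ⟨k, f, hk, hf, rfl⟩ := Submodule.codisjoint_iff_exists_add_eq.1 hKF x
    exact ⟨k, hk, f, ⟨⟨f, hf⟩, by simpa [add_comm k] using hP _ hx (-k) (K.neg_mem hk), rfl⟩, rfl⟩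
  · rintro ⟨k, hk, _, ⟨f, hf, rfl⟩, rfl⟩
    simpa [add_comm] using hP _ hf k hk

section Polyhedron

variable {E Z : Type*} [AddCommGroup E] [Module ℝ E] [AddCommGroup Z] [Module ℝ Z]

/-- Unlike in `IsPCS`, no topology is involved: the functionals are arbitrary linear forms. -/
def IsPolyhedron (S : Set E) : Prop :=
  ∃ (ι : Type) (_ : Fintype ι) (c : ι → E →ₗ[ℝ] ℝ) (β : ι → ℝ), S = {x | ∀ i, c i x ≤ β i}

theorem IsPolyhedron.preimage {S : Set Z} (hS : IsPolyhedron S) (L : E →ₗ[ℝ] Z) :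
    IsPolyhedron (L ⁻¹' S) := by
  obtain ⟨ι, _, c, β, rfl⟩ := hS
  exact ⟨ι, inferInstance, fun i => c i ∘ₗ L, β, rfl⟩

theorem IsPolyhedron.inter {S S' : Set E} (hS : IsPolyhedron S) (hS' : IsPolyhedron S') :
    IsPolyhedron (S ∩ S') := by
  obtain ⟨ι, _, c, β, rfl⟩ := hS
  obtain ⟨κ, _, c', β', rfl⟩ := hS'
  refine ⟨ι ⊕ κ, inferInstance, Sum.elim c c', Sum.elim β β', ?_⟩
  ext x
  simp [Sum.forall]

theorem isPolyhedron_singleton_zero [FiniteDimensional ℝ E] : IsPolyhedron ({0} : Set E) := by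
  let b := Module.finBasis ℝ E
  refine ⟨_ ⊕ _, inferInstance, Sum.elim b.coord (-b.coord), 0, ?_⟩
  ext x
  simp only [Set.mem_singleton_iff, Set.mem_ofPred_eq, Sum.forall, Sum.elim_inl, Sum.elim_inr,
    Pi.zero_apply, Pi.neg_apply, LinearMap.neg_apply, neg_nonpos, ← forall_and]
  exact ⟨fun h i => by simp [h],
    fun h => b.ext_elem fun i => by simpa using le_antisymm (h i).1 (h i).2⟩

/-- Fourier–Motzkin elimination of one real variable. -/
theorem IsPolyhedron.image_snd_real {S : Set (ℝ × Z)} (hS : IsPolyhedron S) :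
    IsPolyhedron (Prod.snd '' S) := by
  obtain ⟨ι, _, c, β, rfl⟩ := hS
  set a : ι → ℝ := fun i => c i (1, 0)
  set c' : ι → Z →ₗ[ℝ] ℝ := fun i => c i ∘ₗ LinearMap.inr ℝ ℝ Z
  have hc : ∀ i t z, c i (t, z) = a i * t + c' i z := fun i t z => by
    rw [show ((t, z) : ℝ × Z) = t • (1, 0) + (0, z) by simp, map_add, map_smul, smul_eq_mul,
      mul_comm]
    rfl
  refine ⟨{i // a i = 0} ⊕ {p : ι × ι // 0 < a p.1 ∧ a p.2 < 0}, inferInstance,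
    Sum.elim (fun i => c' i) (fun p => (a p.1.1)⁻¹ • c' p.1.1 - (a p.1.2)⁻¹ • c' p.1.2),
    Sum.elim (fun i => β i) (fun p => β p.1.1 / a p.1.1 - β p.1.2 / a p.1.2), ?_⟩
  ext z
  have hsnd : z ∈ Prod.snd '' {p : ℝ × Z | ∀ i, c i p ≤ β i} ↔
      ∃ t, ∀ i, a i * t ≤ β i - c' i z := by
    simp only [Set.mem_image, Set.mem_ofPred_eq, Prod.exists, exists_eq_right, hc]
    exact exists_congr fun t => forall_congr' fun i => le_sub_iff_add_le.symm
  rw [hsnd, exists_forall_mul_le_iff]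
  simp only [Set.mem_ofPred_eq, Sum.forall, Sum.elim_inl, Sum.elim_inr, Subtype.forall,
    Prod.forall, LinearMap.sub_apply, LinearMap.smul_apply, smul_eq_mul]
  refine and_congr (forall₂_congr fun i _ => sub_nonneg) (forall₂_congr fun i j => ?_)
  have hdiv : (β j - c' j z) / a j ≤ (β i - c' i z) / a i ↔
      (a i)⁻¹ * c' i z - (a j)⁻¹ * c' j z ≤ β i / a i - β j / a j := by
    rw [sub_div, sub_div, div_eq_inv_mul (c' i z), div_eq_inv_mul (c' j z)]
    constructor <;> intro h <;> linarith
  exact ⟨fun h hij => hdiv.1 (h hij.1 hij.2), fun h hi hj => hdiv.2 (h ⟨hi, hj⟩)⟩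

theorem IsPolyhedron.image_snd_pi {n : ℕ} {S : Set ((Fin n → ℝ) × Z)} (hS : IsPolyhedron S) :
    IsPolyhedron (Prod.snd '' S) := by
  induction n generalizing Z with
  | zero =>
    convert hS.preimage (LinearMap.inr ℝ (Fin 0 → ℝ) Z)
    ext z
    simp only [Set.mem_image, Prod.exists, exists_eq_right, Set.mem_preimage, LinearMap.inr_apply]
    exact ⟨fun ⟨u, hu⟩ => Subsingleton.elim u 0 ▸ hu, fun h => ⟨0, h⟩⟩
  | succ n ih =>
    let φ : (Fin n → ℝ) × (ℝ × Z) →ₗ[ℝ] (Fin (n + 1) → ℝ) × Z :=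
      ((Fin.consLinearEquiv ℝ fun _ => ℝ).toLinearMap ∘ₗ
        ((LinearMap.fst ℝ ℝ Z ∘ₗ LinearMap.snd ℝ _ _).prod (LinearMap.fst ℝ _ _))).prod
        (LinearMap.snd ℝ ℝ Z ∘ₗ LinearMap.snd ℝ _ _)
    have hφ : Prod.snd '' S = Prod.snd '' (Prod.snd '' (φ ⁻¹' S)) := by
      ext z
      simp only [Set.mem_image, Set.mem_preimage, Prod.exists, exists_eq_right]
      refine ⟨fun ⟨u, hu⟩ => ?_, fun ⟨t, v, h⟩ => ⟨_, h⟩⟩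
      obtain ⟨⟨t, v⟩, rfl⟩ := (Fin.consLinearEquiv ℝ fun _ => ℝ).surjective u
      exact ⟨t, v, hu⟩
    rw [hφ]
    exact (ih (hS.preimage φ)).image_snd_real

theorem IsPolyhedron.image [FiniteDimensional ℝ E] [FiniteDimensional ℝ Z] {P : Set E}
    (hP : IsPolyhedron P) (L : E →ₗ[ℝ] Z) : IsPolyhedron (L '' P) := by
  let e := (Module.finBasis ℝ E).equivFun
  let graph : (Fin _ → ℝ) × Z →ₗ[ℝ] Z :=
    L ∘ₗ e.symm.toLinearMap ∘ₗ LinearMap.fst ℝ _ _ - LinearMap.snd ℝ _ _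
  have hL : L '' P =
      Prod.snd '' ((e.symm.toLinearMap ∘ₗ LinearMap.fst ℝ _ _) ⁻¹' P ∩ graph ⁻¹' {0}) := by
    ext z
    simp only [Set.mem_image, Set.mem_inter_iff, Set.mem_preimage, Set.mem_singleton_iff,
      Prod.exists, exists_eq_right, graph, LinearMap.sub_apply, LinearMap.comp_apply,
      LinearMap.fst_apply, LinearMap.snd_apply, LinearEquiv.coe_coe, sub_eq_zero]
    exact e.symm.surjective.exists
  rw [hL]
  exact ((hP.preimage _).inter (isPolyhedron_singleton_zero.preimage graph)).image_snd_pi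

theorem IsPolyhedron.exists_eq_add_image_subtype {P : Set E} (hP : IsPolyhedron P) :
    ∃ (K F : Submodule ℝ E), FiniteDimensional ℝ F ∧
      P = (K : Set E) + F.subtype '' (F.subtype ⁻¹' P) := by
  obtain ⟨ι, _, c, β, rfl⟩ := hP
  let π : E →ₗ[ℝ] ι → ℝ := LinearMap.pi c
  obtain ⟨F, hKF⟩ := (LinearMap.ker π).exists_isCompl
  have hinj : Function.Injective (π ∘ₗ F.subtype) := by
    rw [← LinearMap.ker_eq_bot, LinearMap.ker_comp, ← Submodule.disjoint_iff_comap_eq_bot]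
    exact hKF.disjoint.symm
  refine ⟨LinearMap.ker π, F, Module.Finite.of_injective _ hinj,
    Submodule.eq_add_image_subtype_preimage_of_codisjoint hKF.codisjoint fun x hx k hk i => ?_⟩
  have hk : c i k = 0 := congr_fun (LinearMap.mem_ker.1 hk) i
  simpa [hk] using hx i

end Polyhedron

section GPCS

variable {Y V : Type*} [AddCommGroup Y] [Module ℝ Y] [TopologicalSpace Y]
  [AddCommGroup V] [Module ℝ V] [TopologicalSpace V]

theorem isGPCS_of_fintype {ι : Type*} [Fintype ι] (f : ι → Y →L[ℝ] ℝ) (α : ι → ℝ) (y₀ : Y)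
    (W : Submodule ℝ Y) (hW : IsClosed (y₀ +ᵥ (W : Set Y))) :
    IsGPCS {y ∈ y₀ +ᵥ (W : Set Y) | ∀ i, f i y ≤ α i} := by
  let e := (Fintype.equivFin ι).symm
  refine ⟨_, f ∘ e, α ∘ e, y₀, W, hW, ?_⟩
  simp only [Function.comp_apply, e.forall_congr_left, Equiv.apply_symm_apply]

theorem IsGPCS.isClosed {S : Set Y} (hS : IsGPCS S) : IsClosed S := by
  obtain ⟨p, f, α, y₀, W, hW, rfl⟩ := hS
  convert hW.inter (isClosed_iInter fun i => (isClosed_Iic (a := α i)).preimage (f i).continuous)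
    using 1
  ext
  simp

theorem isGPCS_empty : IsGPCS (∅ : Set Y) := by
  convert isGPCS_of_fintype (fun _ : Unit => (0 : Y →L[ℝ] ℝ)) (fun _ => -1) 0 ⊤ (by simp) using 1
  ext
  simp

theorem IsGPCS.vadd [ContinuousAdd Y] {S : Set Y} (hS : IsGPCS S) (y : Y) : IsGPCS (y +ᵥ S) := by
  obtain ⟨p, f, α, y₀, W, hW, rfl⟩ := hS
  refine ⟨p, f, fun i => f i y + α i, y + y₀, W, by simpa [vadd_vadd] using hW.vadd y, ?_⟩
  ext x
  simp [Set.mem_vadd_set_iff_neg_vadd_mem, add_assoc]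

theorem IsGPCS.preimage {S : Set V} (hS : IsGPCS S) (φ : Y →L[ℝ] V) : IsGPCS (φ ⁻¹' S) := by
  rcases (φ ⁻¹' S).eq_empty_or_nonempty with h | ⟨y₀, hy₀⟩
  · exact h ▸ isGPCS_empty
  obtain ⟨p, f, α, v₀, W, hW, rfl⟩ := hS
  have hpre : φ ⁻¹' (v₀ +ᵥ (W : Set V)) = y₀ +ᵥ (W.comap (φ : Y →ₗ[ℝ] V) : Set Y) := by
    ext y
    have h₀ : -v₀ + φ y₀ ∈ W := Set.mem_vadd_set_iff_neg_vadd_mem.1 hy₀.1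
    simp only [Set.mem_preimage, Set.mem_vadd_set_iff_neg_vadd_mem, vadd_eq_add, SetLike.mem_coe,
      Submodule.mem_comap, ContinuousLinearMap.coe_coe, map_add, map_neg]
    rw [← W.add_mem_iff_right h₀ (y := -φ y₀ + φ y),
      show -v₀ + φ y₀ + (-φ y₀ + φ y) = -v₀ + φ y by abel]
  refine ⟨p, fun i => f i ∘L φ, α, y₀, W.comap (φ : Y →ₗ[ℝ] V),
    hpre ▸ hW.preimage φ.continuous, ?_⟩
  ext y
  simp only [← hpre, Set.mem_preimage, Set.mem_ofPred_eq, ContinuousLinearMap.comp_apply]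

theorem IsPolyhedron.isGPCS_image_subtype [IsTopologicalAddGroup V] [ContinuousSMul ℝ V]
    [SeparatingDual ℝ V] {Z : Submodule ℝ V} [FiniteDimensional ℝ Z] {R : Set Z}
    (hR : IsPolyhedron R) : IsGPCS (Z.subtype '' R) := by
  obtain ⟨ι, _, d, γ, rfl⟩ := hR
  choose ℓ hℓ using fun i => SeparatingDual.dualMap_surjective_iff.2 Z.injective_subtype (d i)
  have hℓ' (i : ι) (z : Z) : d i z = ℓ i z := (LinearMap.congr_fun (hℓ i) z).symm
  have := SeparatingDual.t2Space (R := ℝ) (V := V)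
  convert isGPCS_of_fintype ℓ γ 0 Z (by simpa using Z.closed_of_finiteDimensional) using 1
  ext v
  simp [hℓ', and_comm]

end GPCS

theorem closure_add_eq_of_isClosed {G : Type*} [TopologicalSpace G] [Add G] [ContinuousAdd G]
    {s t : Set G} (h : IsClosed (closure s + t)) : closure (s + t) = closure s + t := by
  refine (closure_minimal (Set.add_subset_add_right subset_closure) h).antisymm ?_
  rintro _ ⟨a, ha, b, hb, rfl⟩
  exact map_mem_closure (f := (· + b)) (continuous_add_const b) ha
    fun x hx => Set.add_mem_add hx hb

theorem Submodule.add_eq_preimage_mkQ_image {R M : Type*} [Ring R] [AddCommGroup M] [Module R M]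
    (N : Submodule R M) (s : Set M) : (N : Set M) + s = N.mkQ ⁻¹' (N.mkQ '' s) := by
  ext y
  simp only [Set.mem_add, Set.mem_preimage, Set.mem_image, Submodule.mkQ_apply,
    Submodule.Quotient.eq, SetLike.mem_coe]
  constructor
  · rintro ⟨n, hn, a, ha, rfl⟩
    exact ⟨a, ha, by simpa using N.neg_mem hn⟩
  · rintro ⟨a, ha, h⟩
    exact ⟨y - a, by simpa using N.neg_mem h, a, ha, sub_add_cancel y a⟩

section LocallyConvex

variable {E Y : Type*} [AddCommGroup E] [Module ℝ E] [AddCommGroup Y] [Module ℝ Y]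
  [TopologicalSpace Y] [IsTopologicalAddGroup Y] [ContinuousSMul ℝ Y] [LocallyConvexSpace ℝ Y]

theorem Submodule.separatingDual_quotient (M : Submodule ℝ Y) (hM : IsClosed (M : Set Y)) :
    SeparatingDual ℝ (Y ⧸ M) := by
  refine ⟨fun x hx => ?_⟩
  obtain ⟨y, rfl⟩ := M.mkQ_surjective x
  have hy : y ∉ M := by simpa [Submodule.Quotient.mk_eq_zero] using hx
  obtain ⟨f, u, hfM, hfy⟩ := geometric_hahn_banach_closed_point M.convex hM hy
  -- `f` is bounded above on the subspace `M`, hence vanishes there.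
  have hker : M ≤ f.ker := fun m hm => by
    by_contra hfm
    replace hfm : f m ≠ 0 := hfm
    have := hfM _ (M.smul_mem (u / f m) hm)
    rw [map_smul, smul_eq_mul, div_mul_cancel₀ u hfm] at this
    exact this.false
  have hu : 0 < u := by simpa using hfM 0 M.zero_mem
  exact ⟨M.liftQL f hker, (hu.trans hfy).ne'⟩

theorem IsPolyhedron.isGPCS_closure_image {P : Set E} (hP : IsPolyhedron P) (T : E →ₗ[ℝ] Y) :
    IsGPCS (closure (T '' P)) := by
  obtain ⟨K, F, _, hPKF⟩ := hP.exists_eq_add_image_subtype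
  set M := (K.map T).topologicalClosure
  have hclosure : closure (T '' K) = M := by
    rw [Submodule.topologicalClosure_coe, Submodule.map_coe]
  have := M.separatingDual_quotient (K.map T).isClosed_topologicalClosure
  set G := T ∘ₗ F.subtype
  set Q := F.subtype ⁻¹' P
  have hMQ : IsGPCS ((M : Set Y) + G '' Q) := by
    let A := (M.mkQ ∘ₗ G).rangeRestrict
    have hA : (M : Set Y) + G '' Q = M.mkQL ⁻¹' ((LinearMap.range _).subtype '' (A '' Q)) := by
      rw [M.add_eq_preimage_mkQ_image, Set.image_image, Set.image_image]
      rfl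
    rw [hA]
    exact ((hP.preimage F.subtype).image A).isGPCS_image_subtype.preimage M.mkQL
  have hTP : T '' P = T '' K + G '' Q := by
    rw [hPKF, Set.image_add, Set.image_image]
    rfl
  rw [hTP, closure_add_eq_of_isClosed (by rw [hclosure]; exact hMQ.isClosed), hclosure]
  exact hMQ

end LocallyConvex

theorem closure_image_isGPCS_general {X : Type*} [AddCommGroup X] [Module ℝ X] [TopologicalSpace X]
    {Y : Type*} [AddCommGroup Y] [Module ℝ Y] [TopologicalSpace Y]
    [IsTopologicalAddGroup Y] [ContinuousSMul ℝ Y] [LocallyConvexSpace ℝ Y]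
    (T : X →ₗ[ℝ] Y) (D : Set X) (hD : IsGPCS D) :
    IsGPCS (closure (T '' D)) := by
  obtain ⟨p, f, α, x₀, W, -, rfl⟩ := hD
  let P : Set W := {w | ∀ i, f i w ≤ α i - f i x₀}
  have hP : IsPolyhedron P :=
    ⟨Fin p, inferInstance, fun i => (f i : X →ₗ[ℝ] ℝ) ∘ₗ W.subtype, fun i => α i - f i x₀, rfl⟩
  have hDP : {x ∈ x₀ +ᵥ (W : Set X) | ∀ i, f i x ≤ α i} = x₀ +ᵥ W.subtype '' P := by
    ext x
    simp [P, Set.mem_vadd_set_iff_neg_vadd_mem, and_comm]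
  rw [hDP, Set.image_vadd_distrib, closure_vadd, Set.image_image]
  exact (hP.isGPCS_closure_image (T ∘ₗ W.subtype)).vadd (T x₀)

/-- The closure of the image of a generalized polyhedral convex set under a
linear map is a generalized polyhedral convex set. -/
theorem closure_image_isGPCS {X : Type*} [AddCommGroup X] [Module ℝ X] [TopologicalSpace X]
    [IsTopologicalAddGroup X] [ContinuousSMul ℝ X] [LocallyConvexSpace ℝ X] [T2Space X] {Y : Type*} [AddCommGroup Y] [Module ℝ Y] [TopologicalSpace Y]
    [IsTopologicalAddGroup Y] [ContinuousSMul ℝ Y] [LocallyConvexSpace ℝ Y] [T2Space Y]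
    (T : X →ₗ[ℝ] Y) (D : Set X) (hD : IsGPCS D) (hne : D.Nonempty) :
    IsGPCS (closure (T '' D)) :=
  closure_image_isGPCS_general T D hD
end

section
/- If D₁ ⊆ X is a polyhedral convex set, D₂ ⊆ X is a generalized polyhedral convex set, and D₁ ∩ D₂ = ∅, then there exists a continuous linear functional x* on X such that sup{⟨x*, u⟩ | u ∈ D₁} < inf{⟨x*, v⟩ | v ∈ D₂} (strong separation). -/
/-!
Write `D₁ = {x | ∀ i, fᵢ x ≤ αᵢ}` and `D₂ = {x ∈ x₀ + W | ∀ j, gⱼ x ≤ βⱼ}`. Disjointness says that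
the finite system `fᵢ ≤ αᵢ, gⱼ ≤ βⱼ` has no solution on the affine subspace `x₀ + W`, so by Farkas'
lemma there are multipliers `λ, μ ≥ 0` such that `φ = ∑ λᵢ fᵢ + ∑ μⱼ gⱼ` vanishes on `W` and
`∑ λᵢ αᵢ + ∑ μⱼ βⱼ < φ x₀`. Then `G = ∑ λᵢ fᵢ` is at most `∑ λᵢ αᵢ` on `D₁` and at least
`φ x₀ - ∑ μⱼ βⱼ` on `D₂`.

Farkas' lemma involves only finitely many functionals, so it reduces to separating a point from a
finitely generated cone in `ℝⁿ`. Such a cone is closed: by Carathéodory's theorem for cones it is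
a finite union of images of orthants under injective linear maps.
-/

open Pointwise

open Set PointedCone

section FinitelyGeneratedCone

variable {ι E : Type*} [AddCommGroup E] [Module ℝ E]

theorem exists_erase_sum_smul_eq_of_pos [DecidableEq ι] (v : ι → E) {s : Finset ι} {c g : ι → ℝ}
    (hc : ∀ i ∈ s, 0 ≤ c i) (hg : ∑ i ∈ s, g i • v i = 0) (hpos : ∃ i ∈ s, 0 < g i) :
    ∃ j ∈ s, ∃ d : ι → ℝ, (∀ i ∈ s.erase j, 0 ≤ d i) ∧
      ∑ i ∈ s.erase j, d i • v i = ∑ i ∈ s, c i • v i := by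
  -- Move along the relation `g` until the coefficient at the minimiser of `c i / g i` vanishes.
  obtain ⟨j, hj, hjmin⟩ := (s.filter (0 < g ·)).exists_min_image (fun i => c i / g i)
    (by simpa [Finset.Nonempty] using hpos)
  rw [Finset.mem_filter] at hj
  set τ := c j / g j
  have hτ : 0 ≤ τ := div_nonneg (hc j hj.1) hj.2.le
  refine ⟨j, hj.1, fun i => c i - τ * g i, fun i hi => ?_, ?_⟩
  · have hi := Finset.mem_of_mem_erase hi
    rcases le_or_gt (g i) 0 with hgi | hgi
    · nlinarith [hc i hi]
    · have := (le_div_iff₀ hgi).1 (hjmin i (Finset.mem_filter.2 ⟨hi, hgi⟩))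
      linarith
  · rw [Finset.sum_erase _ (by simp only [τ, div_mul_cancel₀ _ hj.2.ne', sub_self, zero_smul])]
    simp [sub_smul, Finset.sum_sub_distrib, mul_smul, ← Finset.smul_sum, hg]

/-- Carathéodory's theorem for cones. -/
theorem exists_linearIndepOn_sum_smul_eq [DecidableEq ι] (v : ι → E) (s : Finset ι) (c : ι → ℝ)
    (hc : ∀ i ∈ s, 0 ≤ c i) :
    ∃ t ⊆ s, LinearIndepOn ℝ v t ∧ ∃ d : ι → ℝ, (∀ i ∈ t, 0 ≤ d i) ∧
      ∑ i ∈ t, d i • v i = ∑ i ∈ s, c i • v i := by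
  induction s using Finset.strongInduction generalizing c with
  | H s ih =>
  by_cases hli : LinearIndepOn ℝ v s
  · exact ⟨s, subset_rfl, hli, c, hc, rfl⟩
  obtain ⟨g, hg, i, hi, hgi⟩ := not_linearIndepOn_finset_iff.1 hli
  obtain ⟨j, hj, d, hd, hsum⟩ : ∃ j ∈ s, ∃ d : ι → ℝ, (∀ i ∈ s.erase j, 0 ≤ d i) ∧
      ∑ i ∈ s.erase j, d i • v i = ∑ i ∈ s, c i • v i := by
    rcases hgi.lt_or_gt with hneg | hpos
    · exact exists_erase_sum_smul_eq_of_pos v hc (g := -g) (by simp [neg_smul, hg])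
        ⟨i, hi, by simpa⟩
    · exact exists_erase_sum_smul_eq_of_pos v hc hg ⟨i, hi, hpos⟩
  obtain ⟨t, hts, htli, d', hd', hsum'⟩ := ih _ (Finset.erase_ssubset hj) d hd
  exact ⟨t, hts.trans (Finset.erase_subset _ _), htli, d', hd', hsum'.trans hsum⟩

theorem PointedCone.mem_hull_range_iff [Fintype ι] {v : ι → E} {x : E} :
    x ∈ hull ℝ (range v) ↔ ∃ c : ι → ℝ, (∀ i, 0 ≤ c i) ∧ ∑ i, c i • v i = x := by
  rw [Submodule.mem_span_range_iff_exists_fun]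
  constructor
  · rintro ⟨c, rfl⟩
    exact ⟨fun i => c i, fun i => (c i).2, by simp⟩
  · rintro ⟨c, hc, rfl⟩
    exact ⟨fun i => ⟨c i, hc i⟩, by simp⟩

variable [TopologicalSpace E] [IsTopologicalAddGroup E] [ContinuousSMul ℝ E] [T2Space E]

theorem isClosed_setOf_sum_smul_of_linearIndepOn {v : ι → E} {t : Finset ι}
    (ht : LinearIndepOn ℝ v t) :
    IsClosed {x | ∃ d : ι → ℝ, (∀ i ∈ t, 0 ≤ d i) ∧ ∑ i ∈ t, d i • v i = x} := by
  classical
  set L := Fintype.linearCombination ℝ (fun i : t => v i)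
  have hL : Topology.IsClosedEmbedding L := LinearMap.isClosedEmbedding_of_injective
    (LinearMap.ker_eq_bot.2 (linearIndependent_iff_injective_fintypeLinearCombination.1 ht))
  convert hL.isClosedMap _ (isClosed_Ici (a := (0 : t → ℝ)))
  ext x
  constructor
  · rintro ⟨d, hd, rfl⟩
    exact ⟨fun i => d i, fun i => hd i i.2,
      by simp [L, Fintype.linearCombination_apply, Finset.sum_attach t (fun i => d i • v i)]⟩
  · rintro ⟨d, hd, rfl⟩
    refine ⟨fun i => if h : i ∈ t then d ⟨i, h⟩ else 0,
      fun i hi => by simpa [hi] using hd ⟨i, hi⟩, ?_⟩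
    simp [L, Fintype.linearCombination_apply, ← Finset.sum_coe_sort t]

theorem PointedCone.isClosed_hull_range [Finite ι] (v : ι → E) :
    IsClosed (hull ℝ (range v) : Set E) := by
  classical
  cases nonempty_fintype ι
  have hunion : (hull ℝ (range v) : Set E) = ⋃ t ∈ {t : Finset ι | LinearIndepOn ℝ v t},
      {x | ∃ d : ι → ℝ, (∀ i ∈ t, 0 ≤ d i) ∧ ∑ i ∈ t, d i • v i = x} := by
    ext x
    simp only [mem_iUnion, SetLike.mem_coe, exists_prop]
    constructor
    · intro hx
      obtain ⟨c, hc, rfl⟩ := mem_hull_range_iff.1 hx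
      obtain ⟨t, -, ht, d, hd, hsum⟩ :=
        exists_linearIndepOn_sum_smul_eq v .univ c fun i _ => hc i
      exact ⟨t, ht, d, hd, hsum⟩
    · rintro ⟨t, -, d, hd, rfl⟩
      exact Submodule.sum_mem _ fun i hi =>
        (hull ℝ _).smul_mem (hd i hi) (subset_hull ⟨i, rfl⟩)
  rw [hunion]
  exact (Set.toFinite _).isClosed_biUnion fun t ht => isClosed_setOf_sum_smul_of_linearIndepOn ht

end FinitelyGeneratedCone

section Farkas

theorem Submodule.exists_linearMap_ker_eq {K E : Type*} [Field K] [AddCommGroup E] [Module K E]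
    [FiniteDimensional K E] (U : Submodule K E) :
    ∃ (n : ℕ) (π : E →ₗ[K] Fin n → K), LinearMap.ker π = U :=
  ⟨_, (Module.finBasis K (E ⧸ U)).equivFun.toLinearMap ∘ₗ U.mkQ, by
    rw [LinearEquiv.ker_comp, Submodule.ker_mkQ]⟩

variable {V κ : Type*} [AddCommGroup V] [Module ℝ V] [Fintype κ]

/-- Farkas' lemma. -/
theorem exists_nonneg_sum_mul_eq_zero_of_forall_exists_lt (h : κ → V →ₗ[ℝ] ℝ) (b : κ → ℝ)
    (hinf : ∀ y, ∃ k, b k < h k y) :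
    ∃ ν : κ → ℝ, (∀ k, 0 ≤ ν k) ∧ (∀ y, ∑ k, ν k * h k y = 0) ∧ ∑ k, ν k * b k < 0 := by
  classical
  obtain ⟨n, π, hπ⟩ := (LinearMap.range (LinearMap.pi h)).exists_linearMap_ker_eq
  set w : κ → Fin n → ℝ := fun k => π fun j => if k = j then 1 else 0
  have hπw : ∀ z, π z = ∑ k, z k • w k := LinearMap.pi_apply_eq_sum_univ π
  -- `π` kills exactly the vectors `(h k y)ₖ`, so infeasibility puts `π b` outside the cone.
  have hb : π b ∉ hull ℝ (range w) := by
    rw [mem_hull_range_iff]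
    rintro ⟨c, hc, hcb⟩
    obtain ⟨y, hy⟩ : b - c ∈ LinearMap.range (LinearMap.pi h) := by
      rw [← hπ, LinearMap.mem_ker, map_sub, ← hcb, hπw, sub_self]
    obtain ⟨k, hk⟩ := hinf y
    have := congrFun hy k
    simp only [LinearMap.pi_apply, Pi.sub_apply] at this
    linarith [hc k]
  obtain ⟨φ, hφw, hφb⟩ :=
    ProperCone.hyperplane_separation_point ⟨hull ℝ (range w), isClosed_hull_range w⟩ hb
  have hφπ : ∀ z, φ (π z) = ∑ k, φ (w k) * z k := fun z => by
    simp [hπw, map_sum, mul_comm]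
  refine ⟨fun k => φ (w k), fun k => hφw _ (subset_hull ⟨k, rfl⟩), fun y => ?_, ?_⟩
  · have hy : π (LinearMap.pi h y) = 0 := by
      rw [← LinearMap.mem_ker, hπ]; exact LinearMap.mem_range_self _ y
    simpa [hy] using (hφπ (LinearMap.pi h y)).symm
  · simpa [← hφπ] using hφb

theorem exists_nonneg_sum_mul_eq_zero_of_forall_add_exists_lt (h : κ → V →ₗ[ℝ] ℝ) (b : κ → ℝ)
    (x₀ : V) (W : Submodule ℝ V) (hinf : ∀ w ∈ W, ∃ k, b k < h k (x₀ + w)) :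
    ∃ ν : κ → ℝ, (∀ k, 0 ≤ ν k) ∧ (∀ w ∈ W, ∑ k, ν k * h k w = 0) ∧
      ∑ k, ν k * b k < ∑ k, ν k * h k x₀ := by
  obtain ⟨ν, hν, hνW, hνb⟩ := exists_nonneg_sum_mul_eq_zero_of_forall_exists_lt
    (fun k => h k ∘ₗ W.subtype) (fun k => b k - h k x₀) fun w => by
      obtain ⟨k, hk⟩ := hinf w w.2
      refine ⟨k, ?_⟩
      simp only [LinearMap.comp_apply, Submodule.subtype_apply, map_add] at hk ⊢
      linarith
  refine ⟨ν, hν, fun w hw => hνW ⟨w, hw⟩, ?_⟩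
  simpa [mul_sub, Finset.sum_sub_distrib] using hνb

end Farkas

theorem exists_strict_separation_of_disjoint {X ι₁ ι₂ : Type*} [AddCommGroup X] [Module ℝ X]
    [TopologicalSpace X] [Fintype ι₁] [Fintype ι₂] (f : ι₁ → X →L[ℝ] ℝ) (α : ι₁ → ℝ)
    (g : ι₂ → X →L[ℝ] ℝ) (β : ι₂ → ℝ) (x₀ : X) (W : Submodule ℝ X)
    (hdisj : {x | ∀ i, f i x ≤ α i} ∩ {x ∈ x₀ +ᵥ (W : Set X) | ∀ j, g j x ≤ β j} = ∅) :
    ∃ (G : X →L[ℝ] ℝ) (γ₁ γ₂ : ℝ), γ₁ < γ₂ ∧ (∀ x, (∀ i, f i x ≤ α i) → G x ≤ γ₁) ∧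
      ∀ x ∈ x₀ +ᵥ (W : Set X), (∀ j, g j x ≤ β j) → γ₂ ≤ G x := by
  obtain ⟨ν, hν, hνW, hνb⟩ := exists_nonneg_sum_mul_eq_zero_of_forall_add_exists_lt
    (Sum.elim (fun i => (f i : X →ₗ[ℝ] ℝ)) fun j => (g j : X →ₗ[ℝ] ℝ)) (Sum.elim α β) x₀ W
    fun w hw => by
      by_contra! hle
      refine hdisj.subset ⟨fun i => hle (.inl i), ⟨w, hw, rfl⟩, fun j => hle (.inr j)⟩
  simp only [Fintype.sum_sum_type, Sum.elim_inl, Sum.elim_inr, ContinuousLinearMap.coe_coe]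
    at hνW hνb
  refine ⟨∑ i, ν (.inl i) • f i, ∑ i, ν (.inl i) * α i,
    ∑ i, ν (.inl i) * f i x₀ + ∑ j, ν (.inr j) * (g j x₀ - β j), ?_, fun x hx => ?_, ?_⟩
  · simp only [mul_sub, Finset.sum_sub_distrib]
    linarith
  · simpa using Finset.sum_le_sum fun i _ => mul_le_mul_of_nonneg_left (hx i) (hν (.inl i))
  · rintro _ ⟨w, hw, rfl⟩ hx
    have hgw : ∑ j, ν (.inr j) * g j (x₀ + w) ≤ ∑ j, ν (.inr j) * β j :=
      Finset.sum_le_sum fun j _ => mul_le_mul_of_nonneg_left (hx j) (hν (.inr j))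
    simp only [vadd_eq_add, map_add, mul_add, mul_sub, Finset.sum_add_distrib,
      Finset.sum_sub_distrib, FunLike.coe_sum, Finset.sum_apply,
      FunLike.coe_smul, Pi.smul_apply, smul_eq_mul] at hgw ⊢
    linarith [hνW w hw]

theorem strong_separation_pcs_gpcs_general {X : Type*} [AddCommGroup X] [Module ℝ X] [TopologicalSpace X]
    (D₁ D₂ : Set X) (h₁ : IsPCS D₁) (h₂ : IsGPCS D₂)
    (hne₁ : D₁.Nonempty) (hne₂ : D₂.Nonempty) (hdisj : D₁ ∩ D₂ = ∅) :
    ∃ g : X →L[ℝ] ℝ, sSup (g '' D₁) < sInf (g '' D₂) := by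
  obtain ⟨p, f, α, rfl⟩ := h₁
  obtain ⟨q, g, β, x₀, W, -, rfl⟩ := h₂
  obtain ⟨G, γ₁, γ₂, hγ, hG₁, hG₂⟩ := exists_strict_separation_of_disjoint f α g β x₀ W hdisj
  refine ⟨G, ?_⟩
  calc sSup (G '' _) ≤ γ₁ := csSup_le (hne₁.image G) (forall_mem_image.2 hG₁)
    _ < γ₂ := hγ
    _ ≤ sInf (G '' _) :=
      le_csInf (hne₂.image G) (forall_mem_image.2 fun x hx => hG₂ x hx.1 hx.2)

/-- Strong separation of a polyhedral convex set from a disjoint generalized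
polyhedral convex set. -/
theorem strong_separation_pcs_gpcs {X : Type*} [AddCommGroup X] [Module ℝ X] [TopologicalSpace X]
    [IsTopologicalAddGroup X] [ContinuousSMul ℝ X] [LocallyConvexSpace ℝ X] [T2Space X]
    (D₁ D₂ : Set X) (h₁ : IsPCS D₁) (h₂ : IsGPCS D₂)
    (hne₁ : D₁.Nonempty) (hne₂ : D₂.Nonempty) (hdisj : D₁ ∩ D₂ = ∅) :
    ∃ g : X →L[ℝ] ℝ, sSup (g '' D₁) < sInf (g '' D₂) :=
  strong_separation_pcs_gpcs_general D₁ D₂ h₁ h₂ hne₁ hne₂ hdisj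
end

section
/- If D ⊆ X is a nonempty generalized polyhedral convex set with 0 ∈ D, then cone(D) = {t·x | t ≥ 0, x ∈ D} is a generalized polyhedral convex cone; in particular, cone(D) is closed. -/
/-! A generalized polyhedral convex set containing `0` has the form
`D = {x ∈ W | ∀ i, f i x ≤ α i}` with `W` a closed subspace and all `α i ≥ 0`. Every `y ∈ W`
satisfying the homogeneous constraints `f i y ≤ 0` for the indices with `α i = 0` lies in
`t • D` once `t > 0` dominates the finitely many ratios `f i y / α i` with `α i > 0`; hence
`cone D = {y ∈ W | ∀ i, α i = 0 → f i y ≤ 0}`, again a generalized polyhedral set. -/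

open Pointwise

theorem exists_pos_forall_le_mul {ι : Type*} [Finite ι] (a α : ι → ℝ) (hα : ∀ i, 0 ≤ α i)
    (ha : ∀ i, α i = 0 → a i ≤ 0) : ∃ t > 0, ∀ i, a i ≤ t * α i := by
  obtain ⟨M, hM⟩ := Finite.bddAbove_range fun i => a i / α i
  refine ⟨max M 1, by positivity, fun i => ?_⟩
  rcases (hα i).eq_or_lt with hαi | hαi
  · simpa [← hαi] using ha i hαi.symm
  · rw [← div_le_iff₀ hαi]
    exact (hM ⟨i, rfl⟩).trans (le_max_left M 1)

theorem cone_submodule_inter_halfspaces_eq {X ι : Type*} [AddCommGroup X] [Module ℝ X]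
    [Finite ι] (W : Submodule ℝ X)
    (f : ι → X →ₗ[ℝ] ℝ) (α : ι → ℝ) (hα : ∀ i, 0 ≤ α i) :
    {y : X | ∃ t : ℝ, 0 ≤ t ∧ ∃ x ∈ {x ∈ (W : Set X) | ∀ i, f i x ≤ α i}, y = t • x} =
      {y ∈ (W : Set X) | ∀ i, α i = 0 → f i y ≤ 0} := by
  ext y
  constructor
  · rintro ⟨t, ht, x, ⟨hxW, hxf⟩, rfl⟩
    refine ⟨W.smul_mem t hxW, fun i hαi => ?_⟩
    rw [map_smul, smul_eq_mul]
    exact mul_nonpos_of_nonneg_of_nonpos ht (hαi ▸ hxf i)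
  · rintro ⟨hyW, hyf⟩
    obtain ⟨t, ht, hle⟩ := exists_pos_forall_le_mul (fun i => f i y) α hα hyf
    refine ⟨t, ht.le, t⁻¹ • y, ⟨W.smul_mem _ hyW, fun i => ?_⟩, by rw [smul_inv_smul₀ ht.ne']⟩
    rw [map_smul, smul_eq_mul, inv_mul_le_iff₀ ht]
    exact hle i

section GPCS

variable {X : Type*} [AddCommGroup X] [Module ℝ X] [TopologicalSpace X]

theorem IsGPCS.isClosed_s13 {D : Set X} (hD : IsGPCS D) : IsClosed D := by
  obtain ⟨p, f, α, x₀, W, hW, rfl⟩ := hD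
  refine hW.inter (?_ : IsClosed {x | ∀ i, f i x ≤ α i})
  rw [Set.ofPred_forall]
  exact isClosed_iInter fun i => isClosed_le (f i).continuous continuous_const

theorem IsGPCS.exists_submodule_of_zero_mem {D : Set X} (hD : IsGPCS D) (h0 : (0 : X) ∈ D) :
    ∃ (p : ℕ) (f : Fin p → (X →L[ℝ] ℝ)) (α : Fin p → ℝ) (W : Submodule ℝ X),
      IsClosed (W : Set X) ∧ (∀ i, 0 ≤ α i) ∧ D = {x ∈ (W : Set X) | ∀ i, f i x ≤ α i} := by
  obtain ⟨p, f, α, x₀, W, hW, rfl⟩ := hD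
  obtain ⟨⟨w, hw, hw0⟩, hα⟩ := h0
  have hx₀ : x₀ ∈ W := by
    rw [eq_neg_of_add_eq_zero_left hw0]
    exact W.neg_mem hw
  have hcoset : x₀ +ᵥ (W : Set X) = W := leftAddCoset_mem_leftAddCoset W.toAddSubgroup hx₀
  exact ⟨p, f, α, W, hcoset ▸ hW, fun i => by simpa using hα i, by rw [hcoset]⟩

end GPCS

theorem cone_of_gpcs_zero_mem_general {X : Type*} [AddCommGroup X] [Module ℝ X] [TopologicalSpace X]
    (D : Set X) (hD : IsGPCS D) (h0 : (0 : X) ∈ D) :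
    IsGPCS {y : X | ∃ t : ℝ, 0 ≤ t ∧ ∃ x ∈ D, y = t • x} ∧
      IsClosed {y : X | ∃ t : ℝ, 0 ≤ t ∧ ∃ x ∈ D, y = t • x} := by
  obtain ⟨p, f, α, W, hW, hα, rfl⟩ := hD.exists_submodule_of_zero_mem h0
  have hcone : IsGPCS {y : X | ∃ t : ℝ, 0 ≤ t ∧
      ∃ x ∈ {x ∈ (W : Set X) | ∀ i, f i x ≤ α i}, y = t • x} := by
    refine ⟨p, fun i => if α i = 0 then f i else 0, 0, 0, W, by rwa [zero_vadd], ?_⟩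
    have hcone_eq := cone_submodule_inter_halfspaces_eq W (fun i => (f i : X →ₗ[ℝ] ℝ)) α hα
    simp only [ContinuousLinearMap.coe_coe] at hcone_eq
    rw [hcone_eq, zero_vadd]
    ext y
    refine and_congr_right fun _ => forall_congr' fun i => ?_
    by_cases hαi : α i = 0 <;> simp [hαi]
  exact ⟨hcone, hcone.isClosed_s13⟩

/-- If a generalized polyhedral convex set contains the origin, the cone it
generates is a generalized polyhedral convex cone; in particular it is closed. -/
theorem cone_of_gpcs_zero_mem {X : Type*} [AddCommGroup X] [Module ℝ X] [TopologicalSpace X]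
    [IsTopologicalAddGroup X] [ContinuousSMul ℝ X] [LocallyConvexSpace ℝ X] [T2Space X]
    (D : Set X) (hD : IsGPCS D) (h0 : (0 : X) ∈ D) :
    IsGPCS {y : X | ∃ t : ℝ, 0 ≤ t ∧ ∃ x ∈ D, y = t • x} ∧
      IsClosed {y : X | ∃ t : ℝ, 0 ≤ t ∧ ∃ x ∈ D, y = t • x} :=
  cone_of_gpcs_zero_mem_general D hD h0
end

section
/- A proper function f : X → ℝ ∪ {±∞} is generalized polyhedral convex if and only if dom f is a generalized polyhedral convex set and there exist continuous linear functionals v₁*,...,v_m* and reals β₁,...,β_m such that f(x) = max{⟨v_k*, x⟩ + β_k | k = 1,...,m} for all x ∈ dom f (and f(x) = +∞ otherwise). -/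
/-! If the epigraph is `{z ∈ z₀ + W | gᵢ z ≤ αᵢ}`, it contains a vertical segment, so `(0, 1) ∈ W`
and `z₀ + W` is a cylinder `(x₀ + W') × ℝ`. Writing `gᵢ (x, t) = hᵢ x + t cᵢ`, the epigraph being
unbounded upwards forces `cᵢ ≤ 0`; the constraints with `cᵢ = 0` cut out the domain, and those with
`cᵢ < 0` say `(αᵢ - hᵢ x) / cᵢ ≤ t`, so `f` is the maximum of these affine functions (there is at
least one, as `f > -∞`). Conversely, the epigraph of such a function is the cylinder over its
domain cut by the half-spaces `vₖ x + βₖ ≤ t`. -/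

open Pointwise

theorem EReal.ne_top_iff_exists_le_coe {y : EReal} : y ≠ ⊤ ↔ ∃ t : ℝ, y ≤ t := by
  refine ⟨fun hy => ?_, fun ⟨t, ht⟩ => ne_top_of_le_ne_top (coe_ne_top t) ht⟩
  induction y using EReal.rec with
  | bot => exact ⟨0, bot_le⟩
  | coe r => exact ⟨r, le_rfl⟩
  | top => exact absurd rfl hy

theorem EReal.eq_coe_of_forall_le_coe_iff {y : EReal} {s : ℝ} (h : ∀ t : ℝ, y ≤ t ↔ s ≤ t) :
    y = s := by
  refine le_antisymm ((h s).2 le_rfl) (not_lt.1 fun hys => ?_)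
  obtain ⟨t, hyt, hts⟩ := EReal.exists_between_coe_real hys
  exact (EReal.coe_lt_coe_iff.1 hts).not_ge ((h t).1 hyt.le)

theorem mem_vadd_submodule_iff {R M : Type*} [Ring R] [AddCommGroup M] [Module R M]
    {W : Submodule R M} {x₀ x : M} : x ∈ x₀ +ᵥ (W : Set M) ↔ x - x₀ ∈ W := by
  rw [Set.mem_vadd_set_iff_neg_vadd_mem, vadd_eq_add, neg_add_eq_sub, SetLike.mem_coe]

theorem vadd_submodule_eq_prod_univ {R M : Type*} [Ring R] [AddCommGroup M] [Module R M]
    (z₀ : M × R) {W : Submodule R (M × R)} (hW : ((0 : M), (1 : R)) ∈ W) :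
    z₀ +ᵥ (W : Set (M × R)) =
      (z₀.1 +ᵥ (W.comap (LinearMap.inl R M R) : Set M)) ×ˢ Set.univ := by
  ext ⟨x, t⟩
  have hsplit : (x, t) - z₀ = (x - z₀.1, 0) + (t - z₀.2) • ((0 : M), (1 : R)) := by
    ext <;> simp
  simp only [mem_vadd_submodule_iff, Set.mem_prod, Set.mem_univ, and_true, Submodule.mem_comap,
    LinearMap.inl_apply, hsplit, W.add_mem_iff_left (W.smul_mem _ hW)]

theorem ContinuousLinearMap.apply_mk_eq_comp_inl_add_mul {R M : Type*} [Semiring R]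
    [TopologicalSpace R] [AddCommMonoid M] [Module R M] [TopologicalSpace M] (L : M × R →L[R] R)
    (x : M) (t : R) :
    L (x, t) = L.comp (ContinuousLinearMap.inl R M R) x + t * L (0, 1) := by
  rw [← smul_eq_mul, ← L.map_smul, comp_apply, inl_apply, ← L.map_add]
  simp

theorem IsGPCS.of_finite {X ι : Type*} [AddCommGroup X] [Module ℝ X] [TopologicalSpace X]
    [Finite ι] (g : ι → X →L[ℝ] ℝ) (α : ι → ℝ) {x₀ : X} {W : Submodule ℝ X}
    (hW : IsClosed (x₀ +ᵥ (W : Set X))) :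
    IsGPCS {x ∈ x₀ +ᵥ (W : Set X) | ∀ i, g i x ≤ α i} := by
  let e := (Finite.equivFin ι).symm
  refine ⟨Nat.card ι, g ∘ e, α ∘ e, x₀, W, hW, ?_⟩
  simp only [Function.comp_apply, e.forall_congr_left, Equiv.apply_symm_apply]

theorem exists_fin_iSup_eq {X ι : Type*} [AddCommGroup X] [Module ℝ X] [TopologicalSpace X]
    [Finite ι] [Nonempty ι] (v : ι → X →L[ℝ] ℝ) (β : ι → ℝ) :
    ∃ m, 0 < m ∧ ∃ (v' : Fin m → X →L[ℝ] ℝ) (β' : Fin m → ℝ),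
      ∀ x, ⨆ k, (v' k x + β' k) = ⨆ i, (v i x + β i) := by
  let e := (Finite.equivFin ι).symm
  exact ⟨Nat.card ι, Nat.card_pos, v ∘ e, β ∘ e, fun x => e.iSup_comp (g := fun i => v i x + β i)⟩

theorem IsGPCS.exists_cylinder_repr {X : Type*} [AddCommGroup X] [Module ℝ X]
    [TopologicalSpace X] {S : Set (X × ℝ)} (hS : IsGPCS S) {x₁ : X} {t₁ : ℝ} (h₀ : (x₁, t₁) ∈ S)
    (h₁ : (x₁, t₁ + 1) ∈ S) :
    ∃ (p : ℕ) (h : Fin p → X →L[ℝ] ℝ) (c α : Fin p → ℝ) (x₀ : X) (W : Submodule ℝ X),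
      IsClosed (x₀ +ᵥ (W : Set X)) ∧
        ∀ x t, (x, t) ∈ S ↔ x ∈ x₀ +ᵥ (W : Set X) ∧ ∀ i, h i x + t * c i ≤ α i := by
  obtain ⟨p, g, α, z₀, W, hW, rfl⟩ := hS
  have hvert : ((0 : X), (1 : ℝ)) ∈ W := by
    have := W.sub_mem (mem_vadd_submodule_iff.1 h₁.1) (mem_vadd_submodule_iff.1 h₀.1)
    rwa [sub_sub_sub_cancel_right, Prod.mk_sub_mk, sub_self, add_sub_cancel_left] at this
  rw [vadd_submodule_eq_prod_univ z₀ hvert] at hW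
  refine ⟨p, fun i => (g i).comp (.inl ℝ X ℝ), fun i => g i (0, 1), α, z₀.1,
    W.comap (LinearMap.inl ℝ X ℝ), ?_, fun x t => ?_⟩
  · simpa only [Set.mk_preimage_prod_left (Set.mem_univ (0 : ℝ))]
      using hW.preimage (Continuous.prodMk_left (0 : ℝ))
  · simp_rw [Set.mem_sep_iff, vadd_submodule_eq_prod_univ z₀ hvert, Set.mem_prod,
      Set.mem_univ, and_true, (g _).apply_mk_eq_comp_inl_add_mul x t]

theorem nonpos_of_forall_ge_add_mul_le {a b c t₀ : ℝ} (h : ∀ t ≥ t₀, a + t * c ≤ b) : c ≤ 0 := by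
  by_contra! hc
  have := h (max t₀ ((b - a) / c + 1)) (le_max_left _ _)
  have hmax : ((b - a) / c + 1) * c ≤ max t₀ ((b - a) / c + 1) * c :=
    mul_le_mul_of_nonneg_right (le_max_right _ _) hc.le
  rw [add_mul, div_mul_cancel₀ _ hc.ne'] at hmax
  linarith

theorem add_mul_le_iff_of_nonpos {a b c t : ℝ} (hc : c ≤ 0) :
    a + t * c ≤ b ↔ (c = 0 → a ≤ b) ∧ (c < 0 → (b - a) / c ≤ t) := by
  rcases hc.lt_or_eq with hc | rfl
  · rw [div_le_iff_of_neg hc]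
    simp only [hc.ne, hc, false_imp_iff, true_imp_iff, true_and]
    constructor <;> intro <;> linarith
  · simp

section CylinderEpigraph

variable {X ι : Type*} [AddCommGroup X] [Module ℝ X] [TopologicalSpace X]
  {f : X → EReal} {D : Set X} {h : ι → X →L[ℝ] ℝ} {c α : ι → ℝ} {x : X}

theorem coeff_nonpos_of_epigraph
    (hepi : ∀ x (t : ℝ), f x ≤ t ↔ x ∈ D ∧ ∀ i, h i x + t * c i ≤ α i)
    (hx : f x ≠ ⊤) (i : ι) : c i ≤ 0 := by
  obtain ⟨t₀, ht₀⟩ := EReal.ne_top_iff_exists_le_coe.1 hx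
  exact nonpos_of_forall_ge_add_mul_le fun t ht =>
    ((hepi x t).1 (ht₀.trans (EReal.coe_le_coe_iff.2 ht))).2 i

theorem le_coe_iff_of_epigraph (hepi : ∀ x (t : ℝ), f x ≤ t ↔ x ∈ D ∧ ∀ i, h i x + t * c i ≤ α i)
    (hc : ∀ i, c i ≤ 0) (hx : f x ≠ ⊤) (t : ℝ) :
    f x ≤ t ↔ ∀ i : {i // c i < 0}, (α i - h i x) / c i ≤ t := by
  obtain ⟨t₀, ht₀⟩ := EReal.ne_top_iff_exists_le_coe.1 hx
  simp only [hepi, add_mul_le_iff_of_nonpos (hc _), forall_and] at ht₀ ⊢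
  rw [and_iff_right ht₀.1, and_iff_right ht₀.2.1, Subtype.forall]

theorem exists_coeff_neg_of_epigraph
    (hepi : ∀ x (t : ℝ), f x ≤ t ↔ x ∈ D ∧ ∀ i, h i x + t * c i ≤ α i)
    (hc : ∀ i, c i ≤ 0) (hx : f x ≠ ⊤) (hx' : f x ≠ ⊥) : ∃ i, c i < 0 := by
  by_contra! hc0
  refine hx' ((EReal.eq_bot_iff_forall_lt _).2 fun t => ?_)
  have : f x ≤ (t - 1 : ℝ) :=
    (le_coe_iff_of_epigraph hepi hc hx _).2 fun i => absurd i.2 (hc0 i).not_gt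
  exact this.trans_lt (EReal.coe_lt_coe_iff.2 (by linarith))

theorem eq_iSup_of_epigraph (hepi : ∀ x (t : ℝ), f x ≤ t ↔ x ∈ D ∧ ∀ i, h i x + t * c i ≤ α i)
    [Finite ι] (hc : ∀ i, c i ≤ 0) [Nonempty {i // c i < 0}] (hx : f x ≠ ⊤) :
    f x = ((⨆ i : {i // c i < 0}, (α i - h i x) / c i : ℝ) : EReal) :=
  EReal.eq_coe_of_forall_le_coe_iff fun t => by
    rw [le_coe_iff_of_epigraph hepi hc hx, ciSup_le_iff (Finite.bddAbove_range _)]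

theorem dom_eq_of_epigraph (hepi : ∀ x (t : ℝ), f x ≤ t ↔ x ∈ D ∧ ∀ i, h i x + t * c i ≤ α i)
    [Finite ι] (hc : ∀ i, c i ≤ 0) :
    {x | f x ≠ ⊤} = {x ∈ D | ∀ i : {i // c i = 0}, h i x ≤ α i} := by
  ext x
  simp only [Set.mem_ofPred_eq, EReal.ne_top_iff_exists_le_coe, hepi,
    add_mul_le_iff_of_nonpos (hc _), forall_and, Subtype.forall]
  constructor
  · rintro ⟨t, hD, hc0, -⟩
    exact ⟨hD, hc0⟩
  · rintro ⟨hD, hc0⟩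
    obtain ⟨t, ht⟩ := Finite.exists_le fun i => (α i - h i x) / c i
    exact ⟨t, hD, hc0, fun i _ => ht i⟩

end CylinderEpigraph

theorem isGPCS_epigraph_of_max_affine {X ι : Type*} [AddCommGroup X] [Module ℝ X]
    [TopologicalSpace X] [Finite ι] [Nonempty ι] {f : X → EReal} (hdom : IsGPCS {x | f x ≠ ⊤})
    (v : ι → X →L[ℝ] ℝ) (β : ι → ℝ)
    (hf : ∀ x, f x ≠ ⊤ → f x = ((⨆ k, (v k x + β k) : ℝ) : EReal)) :
    IsGPCS {p : X × ℝ | f p.1 ≤ p.2} := by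
  obtain ⟨q, F, a, x₀, W, hW, hD⟩ := hdom
  have hepi : ∀ x (t : ℝ), f x ≤ t ↔ (x ∈ x₀ +ᵥ (W : Set X) ∧ ∀ i, F i x ≤ a i) ∧
      ∀ k, v k x + β k ≤ t := by
    intro x t
    have hxD : f x ≠ ⊤ ↔ x ∈ x₀ +ᵥ (W : Set X) ∧ ∀ i, F i x ≤ a i := Set.ext_iff.1 hD x
    rw [← hxD]
    by_cases hx : f x = ⊤
    · simp [hx]
    · rw [hf x hx, EReal.coe_le_coe_iff, ciSup_le_iff (Finite.bddAbove_range _),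
        and_iff_right (EReal.coe_ne_top _)]
  have hcyl := vadd_submodule_eq_prod_univ ((x₀, 0) : X × ℝ) (W := W.prod ⊤)
    ⟨W.zero_mem, Submodule.mem_top⟩
  rw [Submodule.prod_comap_inl] at hcyl
  convert IsGPCS.of_finite (Sum.elim (fun i => (F i).comp (.fst ℝ X ℝ))
    (fun k => (v k).comp (.fst ℝ X ℝ) - .snd ℝ X ℝ)) (Sum.elim a (-β))
    (hcyl ▸ hW.prod isClosed_univ) using 1
  ext ⟨x, t⟩
  rw [Set.mem_sep_iff, hcyl]
  simp [hepi, Sum.forall, and_assoc, add_comm]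

theorem isGPCF_iff_max_affine_general {X : Type*} [AddCommGroup X] [Module ℝ X] [TopologicalSpace X]
    (f : X → EReal) (hproper : {x : X | f x ≠ ⊤}.Nonempty ∧ ∀ x, f x ≠ ⊥) :
    IsGPCS {p : X × ℝ | f p.1 ≤ (p.2 : EReal)} ↔
      IsGPCS {x : X | f x ≠ ⊤} ∧
        ∃ (m : ℕ), 0 < m ∧ ∃ (v : Fin m → (X →L[ℝ] ℝ)) (β : Fin m → ℝ),
          ∀ x, f x ≠ ⊤ → f x = ((⨆ k, (v k x + β k) : ℝ) : EReal) := by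
  refine ⟨fun hepi => ?_, fun ⟨hdom, m, hm, v, β, hf⟩ => ?_⟩
  · obtain ⟨⟨x₁, hx₁⟩, hbot⟩ := hproper
    obtain ⟨r, hr⟩ := EReal.ne_top_iff_exists_le_coe.1 hx₁
    obtain ⟨p, h, c, α, x₀, W, hW, hS⟩ := hepi.exists_cylinder_repr (x₁ := x₁) hr
      (hr.trans (EReal.coe_le_coe_iff.2 (by linarith)))
    have hc := coeff_nonpos_of_epigraph hS hx₁
    obtain ⟨i₀, hi₀⟩ := exists_coeff_neg_of_epigraph hS hc hx₁ (hbot x₁)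
    have : Nonempty {i // c i < 0} := ⟨⟨i₀, hi₀⟩⟩
    obtain ⟨m, hm, v, β, hvβ⟩ := exists_fin_iSup_eq
      (fun i : {i // c i < 0} => (-(c i)⁻¹) • h i) (fun i => α i / c i)
    refine ⟨dom_eq_of_epigraph hS hc ▸ IsGPCS.of_finite _ _ hW, m, hm, v, β, fun x hx => ?_⟩
    rw [hvβ, eq_iSup_of_epigraph hS hc hx]
    congr! 3 with i
    rw [smul_apply, smul_eq_mul]
    ring
  · have : Nonempty (Fin m) := ⟨⟨0, hm⟩⟩
    exact isGPCS_epigraph_of_max_affine hdom v β hf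

/-- A proper function is generalized polyhedral convex iff its effective domain
is a generalized polyhedral convex set and it is the maximum of finitely many
continuous affine functions on its domain. -/
theorem isGPCF_iff_max_affine {X : Type*} [AddCommGroup X] [Module ℝ X] [TopologicalSpace X]
    [IsTopologicalAddGroup X] [ContinuousSMul ℝ X] [LocallyConvexSpace ℝ X] [T2Space X]
    (f : X → EReal) (hproper : {x : X | f x ≠ ⊤}.Nonempty ∧ ∀ x, f x ≠ ⊥) :
    IsGPCS {p : X × ℝ | f p.1 ≤ (p.2 : EReal)} ↔
      IsGPCS {x : X | f x ≠ ⊤} ∧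
        ∃ (m : ℕ), 0 < m ∧ ∃ (v : Fin m → (X →L[ℝ] ℝ)) (β : Fin m → ℝ),
          ∀ x, f x ≠ ⊤ → f x = ((⨆ k, (v k x + β k) : ℝ) : EReal) :=
  isGPCF_iff_max_affine_general f hproper
end
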